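/- If x ⪯ z, then for any distinct vertices i,j and pattern g, the edge-increment counts satisfy N_g(x_{ij}^1) − N_g(x_{ij}^0) ≤ N_g(z_{ij}^1) − N_g(z_{ij}^0). -/

import Mathlib

/-- A simple undirected graph on vertex set `Fin N`, represented as a symmetric
Boolean adjacency matrix with zero diagonal. -/
def BoolGraph (N : ℕ) : Type :=
  {x : Fin N → Fin N → Bool // (∀ i j, x i j = x j i) ∧ ∀ i, x i i = false}

namespace BoolGraph

variable {N : ℕ}

instance : Finite (BoolGraph N) := by unfold BoolGraph; infer_instance

noncomputable instance : Fintype (BoolGraph N) := Fintype.ofFinite _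

/-- The edge-inclusion partial order: `x ⪯ y` iff every edge of `x` is an edge of `y`. -/
def le {N : ℕ} (x y : BoolGraph N) : Prop := ∀ i j, x.1 i j = true → y.1 i j = true

/-- The empty graph. -/
def empty (N : ℕ) : BoolGraph N := ⟨fun _ _ => false, fun _ _ => rfl, fun _ => rfl⟩

/-- The complete graph. -/
def complete (N : ℕ) : BoolGraph N :=
  ⟨fun i j => decide (i ≠ j), by
    intro i j
    simp [decide_eq_decide]
    exact eq_comm, by intro i; simp⟩

/-- `setEdge x i j a` is the graph `x` with the edge `(i,j)` (and `(j,i)`) set to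
the value `a` (when `i ≠ j`; if `i = j` the graph is unchanged). -/
def setEdge (x : BoolGraph N) (i j : Fin N) (a : Bool) : BoolGraph N :=
  if h : i = j then x else
    ⟨fun k l => if (k = i ∧ l = j) ∨ (k = j ∧ l = i) then a else x.1 k l,
      by
        intro k l
        have hiff : ((k = i ∧ l = j) ∨ (k = j ∧ l = i)) ↔ ((l = i ∧ k = j) ∨ (l = j ∧ k = i)) := by
          tauto
        dsimp only
        by_cases hc : (k = i ∧ l = j) ∨ (k = j ∧ l = i)
        · rw [if_pos hc, if_pos (hiff.mp hc)]
        · rw [if_neg hc, if_neg (fun hc' => hc (hiff.mpr hc'))]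
          exact x.2.1 k l,
      by
        intro k
        dsimp only
        rw [if_neg, x.2.2 k]
        rintro (⟨hk, hl⟩ | ⟨hk, hl⟩)
        · exact h (hk.symm.trans hl)
        · exact h (hl.symm.trans hk) ⟩

/-- `v` is an (injective, labeled) copy of the pattern `g` in `x`. -/
def Contains {m N : ℕ} (g : BoolGraph m) (x : BoolGraph N) (v : Fin m ↪ Fin N) : Prop :=
  ∀ k l, g.1 k l = true → x.1 (v k) (v l) = true

/-- The number of labeled copies of the pattern `g` in the graph `x`. -/
noncomputable def copyCount {m N : ℕ} (g : BoolGraph m) (x : BoolGraph N) : ℕ :=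
  Nat.card {v : Fin m ↪ Fin N // Contains g x v}

end BoolGraph

/-! A copy `v` of `g` in `x_{ij}^1` is a copy in `x_{ij}^0` exactly when no edge of `g` is
mapped onto `{i, j}`. So the increment `N_g(x_{ij}^1) - N_g(x_{ij}^0)` counts the copies in
`x_{ij}^1` that pass through `{i, j}`, and this set grows with `x`. -/

namespace BoolGraph

variable {N m : ℕ}

def edgeCopies (g : BoolGraph m) (i j : Fin N) : Set (Fin m ↪ Fin N) :=
  {v | ∃ k l, g.1 k l = true ∧ s(v k, v l) = s(i, j)}

lemma setEdge_apply (x : BoolGraph N) {i j : Fin N} (hij : i ≠ j) (a : Bool) (k l : Fin N) :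
    (setEdge x i j a).1 k l = if s(k, l) = s(i, j) then a else x.1 k l := by
  simp [setEdge, hij]

lemma le_setEdge {x z : BoolGraph N} (hxz : x.le z) (i j : Fin N) (a : Bool) :
    (setEdge x i j a).le (setEdge z i j a) := by
  by_cases hij : i = j
  · simpa [setEdge, hij] using hxz
  · intro k l
    rw [setEdge_apply x hij, setEdge_apply z hij]
    split_ifs
    exacts [id, hxz k l]

lemma Contains.mono {g : BoolGraph m} {x y : BoolGraph N} (hxy : x.le y) {v : Fin m ↪ Fin N}
    (hv : Contains g x v) : Contains g y v :=
  fun k l hkl => hxy _ _ (hv k l hkl)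

lemma setOf_contains_setEdge_false (g : BoolGraph m) (x : BoolGraph N) {i j : Fin N}
    (hij : i ≠ j) :
    {v | Contains g (setEdge x i j false) v} =
      {v | Contains g (setEdge x i j true) v} \ edgeCopies g i j := by
  ext v
  simp only [Set.mem_ofPred_eq, Set.mem_sdiff, edgeCopies, Contains, setEdge_apply x hij]
  constructor
  · intro hv
    refine ⟨fun k l hkl => ?_, fun ⟨k, l, hkl, hvkl⟩ => by simpa [hvkl] using hv k l hkl⟩
    have := hv k l hkl
    split_ifs at this ⊢
    exact this
  · rintro ⟨hv, hvij⟩ k l hkl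
    have hvkl : s(v k, v l) ≠ s(i, j) := fun h => hvij ⟨k, l, hkl, h⟩
    simpa [hvkl] using hv k l hkl

lemma copyCount_eq_ncard (g : BoolGraph m) (x : BoolGraph N) :
    copyCount g x = {v : Fin m ↪ Fin N | Contains g x v}.ncard :=
  (Nat.card_coe_set_eq _).symm

lemma copyCount_setEdge_true (g : BoolGraph m) (x : BoolGraph N) {i j : Fin N} (hij : i ≠ j) :
    copyCount g (setEdge x i j true) = copyCount g (setEdge x i j false) +
      ({v | Contains g (setEdge x i j true) v} ∩ edgeCopies g i j).ncard := by
  rw [copyCount_eq_ncard, copyCount_eq_ncard, setOf_contains_setEdge_false g x hij, add_comm,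
    Set.ncard_inter_add_ncard_sdiff_eq_ncard]

end BoolGraph

open BoolGraph in
/-- if `x ⪯ z` then the edge-increment counts satisfy
`N_g(x_{ij}^1) − N_g(x_{ij}^0) ≤ N_g(z_{ij}^1) − N_g(z_{ij}^0)`. -/
theorem copyCount_increment_monotone {N m : ℕ} (g : BoolGraph m) (x z : BoolGraph N)
    (hxz : BoolGraph.le x z) (i j : Fin N) (hij : i ≠ j) :
    (copyCount g (setEdge x i j true) : ℤ) - copyCount g (setEdge x i j false) ≤
    (copyCount g (setEdge z i j true) : ℤ) - copyCount g (setEdge z i j false) := by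
  rw [copyCount_setEdge_true g x hij, copyCount_setEdge_true g z hij]
  push_cast
  simp only [add_sub_cancel_left, Nat.cast_le]
  exact Set.ncard_le_ncard
    (Set.inter_subset_inter_left _ fun _ => Contains.mono (le_setEdge hxz i j true))
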